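/- Let A be an m-stochastic tensor of dimension N with m ≥ 3. The probability vector p ∈ Δ_N satisfies A[p,...,p] = λ·p for some λ if and only if there exists a subset I ⊂ {1,...,N} with A_{i_1...i_m} = 0 for all i_1 ∈ I, i_2,...,i_m ∉ I, such that p_i = 0 for i ∈ I and p_i = 1/(N−|I|) for i ∉ I; moreover, in this case λ = 1. -/
import Mathlib

set_option linter.unusedSectionVars false
set_option linter.unusedVariables false

open Finset

/-- An `m`-stochastic tensor of dimension `N`: all entries are nonnegative and
the sum over any single index (the others being fixed) equals `1`. -/
def MStochastic {N m : ℕ} (A : (Fin m → Fin N) → ℝ) : Prop :=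
  (∀ f, 0 ≤ A f) ∧
    ∀ (t : Fin m) (f : Fin m → Fin N), ∑ v : Fin N, A (Function.update f t v) = 1

/-- The multilinear action of the tensor `A`, with output in slot `t` and the
probability vector `p s` fed into each input slot `s ≠ t`:
`A[p]_{i} = Σ_{g, g t = i} A_g · Π_{s ≠ t} (p s)_{g s}`. -/
def mAct {N m : ℕ} (A : (Fin m → Fin N) → ℝ) (t : Fin m) (p : Fin m → Fin N → ℝ) :
    Fin N → ℝ :=
  fun i => ∑ g : Fin m → Fin N,
    if g t = i then A g * ∏ s ∈ Finset.univ.erase t, p s (g s) else 0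

section Helpers

variable {α β : Type*} [DecidableEq α] [Fintype α] [Fintype β]

/-- Combine a value at slot `t` with a function on the other slots. -/
def cmb (t : α) (v : β) (h : {s : α // s ≠ t} → β) : α → β :=
  fun s => if hs : s = t then v else h ⟨s, hs⟩

lemma cmb_self (t : α) (v : β) (h : {s : α // s ≠ t} → β) : cmb t v h t = v := by
  simp [cmb]

lemma cmb_ne (t : α) (v : β) (h : {s : α // s ≠ t} → β) {s : α} (hs : s ≠ t) :
    cmb t v h s = h ⟨s, hs⟩ := by simp [cmb, hs]

lemma update_cmb (t : α) (v v' : β) (h : {s : α // s ≠ t} → β) :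
    Function.update (cmb t v h) t v' = cmb t v' h := by
  funext s
  rcases eq_or_ne s t with rfl | hs
  · rw [Function.update_self, cmb_self]
  · rw [Function.update_of_ne hs, cmb_ne _ _ _ hs, cmb_ne _ _ _ hs]

lemma cmb_eta (t : α) (g : α → β) : cmb t (g t) (fun s => g s.1) = g := by
  funext s
  rcases eq_or_ne s t with rfl | hs
  · rw [cmb_self]
  · rw [cmb_ne _ _ _ hs]

/-- Splitting the function space at one slot. -/
def splitEquiv (t : α) : (α → β) ≃ β × ({s : α // s ≠ t} → β) where
  toFun g := (g t, fun s => g s.1)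
  invFun x := cmb t x.1 x.2
  left_inv g := cmb_eta t g
  right_inv x := by
    obtain ⟨v, h⟩ := x
    simp only [Prod.mk.injEq]
    exact ⟨cmb_self t v h, funext fun s => cmb_ne t v h s.2⟩

lemma sum_split (t : α) (F : (α → β) → ℝ) :
    ∑ g : α → β, F g = ∑ v : β, ∑ h : {s : α // s ≠ t} → β, F (cmb t v h) := by
  rw [← Equiv.sum_comp (splitEquiv (α := α) (β := β) t).symm F, Fintype.sum_prod_type]
  rfl

lemma prod_erase_subtype (t : α) (f : α → ℝ) :
    ∏ s ∈ univ.erase t, f s = ∏ s : {s : α // s ≠ t}, f s.1 :=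
  Finset.prod_subtype (univ.erase t) (fun x => by simp) f

lemma sum_pi_prod {ι : Type*} [Fintype ι] [DecidableEq ι] (q : β → ℝ) (hq : ∑ v : β, q v = 1) :
    ∑ h : ι → β, ∏ s : ι, q (h s) = 1 := by
  classical
  have h1 := Finset.prod_univ_sum (fun _ : ι => (univ : Finset β)) (fun _ v => q v)
  rw [Fintype.piFinset_univ] at h1
  rw [← h1]
  simp [hq]

end Helpers

section Tensor

variable {N m : ℕ} (A : (Fin m → Fin N) → ℝ) (p : Fin N → ℝ)

lemma stoch_cmb (hA : MStochastic A) (hN : N ≠ 0) (t : Fin m)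
    (h : {s : Fin m // s ≠ t} → Fin N) :
    ∑ v : Fin N, A (cmb t v h) = 1 := by
  have hv0 : (0:ℕ) < N := Nat.pos_of_ne_zero hN
  have h1 := hA.2 t (cmb t ⟨0, hv0⟩ h)
  rw [← h1]
  exact Finset.sum_congr rfl fun v _ => by rw [update_cmb]

lemma cmb_cmb_update (z : Fin m) (t' : {s : Fin m // s ≠ z}) (i v v' : Fin N)
    (h₂ : {s' : {s : Fin m // s ≠ z} // s' ≠ t'} → Fin N) :
    Function.update (cmb z i (cmb t' v' h₂)) t'.1 v = cmb z i (cmb t' v h₂) := by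
  funext s
  rcases eq_or_ne s t'.1 with rfl | hs
  · rw [Function.update_self, cmb_ne _ _ _ t'.2]
    exact (cmb_self t' v h₂).symm
  · rw [Function.update_of_ne hs]
    rcases eq_or_ne s z with rfl | hsz
    · rw [cmb_self, cmb_self]
    · have hne : (⟨s, hsz⟩ : {s : Fin m // s ≠ z}) ≠ t' := fun hc => hs (congrArg Subtype.val hc)
      rw [cmb_ne _ _ _ hsz, cmb_ne _ _ _ hsz, cmb_ne _ _ _ hne, cmb_ne _ _ _ hne]

lemma stoch_cmb_cmb (hA : MStochastic A) (hN : N ≠ 0) (z : Fin m)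
    (t' : {s : Fin m // s ≠ z}) (i : Fin N)
    (h₂ : {s' : {s : Fin m // s ≠ z} // s' ≠ t'} → Fin N) :
    ∑ v : Fin N, A (cmb z i (cmb t' v h₂)) = 1 := by
  have hv0 : (0:ℕ) < N := Nat.pos_of_ne_zero hN
  have h1 := hA.2 t'.1 (cmb z i (cmb t' ⟨0, hv0⟩ h₂))
  rw [← h1]
  exact Finset.sum_congr rfl fun v _ => by rw [cmb_cmb_update]

lemma mAct_eq (z : Fin m) (i : Fin N) :
    mAct A z (fun _ => p) i
      = ∑ h : {s : Fin m // s ≠ z} → Fin N,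
          A (cmb z i h) * ∏ s' : {s : Fin m // s ≠ z}, p (h s') := by
  show (∑ g : Fin m → Fin N,
      if g z = i then A g * ∏ s ∈ univ.erase z, p (g s) else 0) = _
  rw [sum_split z, Finset.sum_comm]
  refine Finset.sum_congr rfl fun h _ => ?_
  have h1 : ∀ v : Fin N,
      (if cmb z v h z = i then A (cmb z v h) * ∏ s ∈ univ.erase z, p (cmb z v h s) else 0)
        = (if v = i then A (cmb z v h) * ∏ s ∈ univ.erase z, p (cmb z v h s) else 0) := by
    intro v; rw [cmb_self]
  rw [Finset.sum_congr rfl fun v _ => h1 v,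
    Finset.sum_ite_eq' univ i (fun v => A (cmb z v h) * ∏ s ∈ univ.erase z, p (cmb z v h s)),
    if_pos (mem_univ i)]
  congr 1
  rw [prod_erase_subtype z (fun s => p (cmb z i h s))]
  exact Finset.prod_congr rfl fun s' _ => by rw [cmb_ne _ _ _ s'.2]

lemma sum_mAct (hA : MStochastic A) (hN : N ≠ 0) (hpsum : ∑ i, p i = 1) (z : Fin m) :
    ∑ i, mAct A z (fun _ => p) i = 1 := by
  rw [Finset.sum_congr rfl fun i _ => mAct_eq A p z i, Finset.sum_comm]
  have h2 : ∀ h : {s : Fin m // s ≠ z} → Fin N,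
      ∑ i, A (cmb z i h) * (∏ s' : {s : Fin m // s ≠ z}, p (h s'))
        = ∏ s' : {s : Fin m // s ≠ z}, p (h s') := by
    intro h
    rw [← Finset.sum_mul, stoch_cmb A hA hN z h, one_mul]
  rw [Finset.sum_congr rfl fun h _ => h2 h]
  exact sum_pi_prod p hpsum

lemma R_eq_one (hA : MStochastic A) (hN : N ≠ 0) (hpsum : ∑ i, p i = 1) (z : Fin m)
    (t' : {s : Fin m // s ≠ z}) (i : Fin N) :
    ∑ h : {s : Fin m // s ≠ z} → Fin N,
      A (cmb z i h) * ∏ s' ∈ univ.erase t', p (h s') = 1 := by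
  rw [sum_split t', Finset.sum_comm]
  have h2 : ∀ h₂ : {s' : {s : Fin m // s ≠ z} // s' ≠ t'} → Fin N,
      ∑ v, A (cmb z i (cmb t' v h₂)) * ∏ s' ∈ univ.erase t', p (cmb t' v h₂ s')
        = ∏ s'' : {s' : {s : Fin m // s ≠ z} // s' ≠ t'}, p (h₂ s'') := by
    intro h₂
    have hp' : ∀ v, ∏ s' ∈ univ.erase t', p (cmb t' v h₂ s')
        = ∏ s'' : {s' : {s : Fin m // s ≠ z} // s' ≠ t'}, p (h₂ s'') := by
      intro v
      rw [prod_erase_subtype t' (fun s' => p (cmb t' v h₂ s'))]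
      exact Finset.prod_congr rfl fun s'' _ => by rw [cmb_ne _ _ _ s''.2]
    rw [Finset.sum_congr rfl fun v _ => by rw [hp' v], ← Finset.sum_mul,
      stoch_cmb_cmb A hA hN z t' i h₂, one_mul]
  rw [Finset.sum_congr rfl fun h₂ _ => h2 h₂]
  exact sum_pi_prod p hpsum

lemma peel (hA : MStochastic A) (hN : N ≠ 0) (t : Fin m) (J : Fin m → Finset (Fin N))
    (hyp : ∀ g : Fin m → Fin N, (∀ s, s ≠ t → g s ∈ J s) →
      ∑ v ∈ J t, A (Function.update g t v) = 1) :
    ∑ g ∈ Fintype.piFinset J, A g = ∏ s ∈ univ.erase t, ((J s).card : ℝ) := by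
  classical
  have hv0 : (0:ℕ) < N := Nat.pos_of_ne_zero hN
  have hfilter : Fintype.piFinset J = univ.filter (fun g : Fin m → Fin N => ∀ s, g s ∈ J s) := by
    ext g; simp [Fintype.mem_piFinset]
  rw [hfilter, Finset.sum_filter,
    sum_split t (fun g => if (∀ s, g s ∈ J s) then A g else 0), Finset.sum_comm]
  have hcond : ∀ (v : Fin N) (h : {s : Fin m // s ≠ t} → Fin N),
      (∀ s, cmb t v h s ∈ J s) ↔ (v ∈ J t ∧ ∀ s' : {s : Fin m // s ≠ t}, h s' ∈ J s'.1) := by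
    intro v h
    constructor
    · intro hall
      refine ⟨?_, fun s' => ?_⟩
      · have := hall t; rwa [cmb_self] at this
      · have := hall s'.1; rwa [cmb_ne _ _ _ s'.2] at this
    · rintro ⟨hv, hh⟩ s
      rcases eq_or_ne s t with rfl | hs
      · rw [cmb_self]; exact hv
      · rw [cmb_ne _ _ _ hs]; exact hh ⟨s, hs⟩
  have hterm : ∀ h : {s : Fin m // s ≠ t} → Fin N,
      (∑ v : Fin N, if (∀ s, cmb t v h s ∈ J s) then A (cmb t v h) else 0)
        = if (∀ s' : {s : Fin m // s ≠ t}, h s' ∈ J s'.1) then (1:ℝ) else 0 := by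
    intro h
    by_cases hh : ∀ s' : {s : Fin m // s ≠ t}, h s' ∈ J s'.1
    · rw [if_pos hh]
      have hrw : ∀ v : Fin N,
          (if (∀ s, cmb t v h s ∈ J s) then A (cmb t v h) else 0)
            = (if v ∈ J t then A (cmb t v h) else 0) := by
        intro v
        by_cases hv : v ∈ J t
        · rw [if_pos ((hcond v h).2 ⟨hv, hh⟩), if_pos hv]
        · rw [if_neg (fun hc => hv ((hcond v h).1 hc).1), if_neg hv]
      rw [Finset.sum_congr rfl fun v _ => hrw v, Finset.sum_ite_mem, Finset.univ_inter]
      have hg : ∀ s, s ≠ t → cmb t ⟨0, hv0⟩ h s ∈ J s := by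
        intro s hs; rw [cmb_ne _ _ _ hs]; exact hh ⟨s, hs⟩
      calc ∑ v ∈ J t, A (cmb t v h)
          = ∑ v ∈ J t, A (Function.update (cmb t ⟨0, hv0⟩ h) t v) :=
            Finset.sum_congr rfl fun v _ => by rw [update_cmb]
        _ = 1 := hyp (cmb t ⟨0, hv0⟩ h) hg
    · rw [if_neg hh]
      exact Finset.sum_eq_zero fun v _ => if_neg (fun hc => hh ((hcond v h).1 hc).2)
  rw [Finset.sum_congr rfl fun h _ => hterm h, Finset.sum_boole]
  have hfilter2 : univ.filter (fun h : {s : Fin m // s ≠ t} → Fin N =>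
      ∀ s', h s' ∈ J s'.1) = Fintype.piFinset (fun s' : {s : Fin m // s ≠ t} => J s'.1) := by
    ext h; simp [Fintype.mem_piFinset]
  rw [hfilter2, Fintype.card_piFinset, prod_erase_subtype t (fun s => ((J s).card : ℝ))]
  push_cast
  rfl

lemma sum_split_set (t : Fin m) (J : Fin m → Finset (Fin N)) (B C : Finset (Fin N))
    (hd : Disjoint B C) (hu : J t = B ∪ C) (F : (Fin m → Fin N) → ℝ) :
    ∑ g ∈ Fintype.piFinset J, F g
      = ∑ g ∈ Fintype.piFinset (Function.update J t B), F g
        + ∑ g ∈ Fintype.piFinset (Function.update J t C), F g := by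
  classical
  have hdisj : Disjoint (Fintype.piFinset (Function.update J t B))
      (Fintype.piFinset (Function.update J t C)) := by
    rw [Finset.disjoint_left]
    intro g hg1 hg2
    have h1 := Fintype.mem_piFinset.1 hg1 t
    have h2 := Fintype.mem_piFinset.1 hg2 t
    rw [Function.update_self] at h1 h2
    exact (Finset.disjoint_left.1 hd h1) h2
  have hun : Fintype.piFinset (Function.update J t B) ∪ Fintype.piFinset (Function.update J t C)
      = Fintype.piFinset J := by
    ext g
    simp only [Finset.mem_union, Fintype.mem_piFinset]
    constructor
    · rintro (hg | hg) s
      · have := hg s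
        rcases eq_or_ne s t with rfl | hs
        · rw [Function.update_self] at this; rw [hu]; exact Finset.mem_union_left _ this
        · rwa [Function.update_of_ne hs] at this
      · have := hg s
        rcases eq_or_ne s t with rfl | hs
        · rw [Function.update_self] at this; rw [hu]; exact Finset.mem_union_right _ this
        · rwa [Function.update_of_ne hs] at this
    · intro hg
      have hgt := hg t
      rw [hu, Finset.mem_union] at hgt
      rcases hgt with h | h
      · left
        intro s
        rcases eq_or_ne s t with rfl | hs
        · rwa [Function.update_self]
        · rw [Function.update_of_ne hs]; exact hg s
      · right
        intro s
        rcases eq_or_ne s t with rfl | hs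
        · rwa [Function.update_self]
        · rw [Function.update_of_ne hs]; exact hg s
  rw [← hun, Finset.sum_union hdisj]

lemma key (hA : MStochastic A) (hN : N ≠ 0) {z t₁ : Fin m} (hzt : t₁ ≠ z)
    (B S' : Finset (Fin N))
    (h1 : ∀ g : Fin m → Fin N, g z ∈ B → (∀ s, s ≠ z → s ≠ t₁ → g s ∈ S') →
        ∑ v ∈ B, A (Function.update g t₁ v) = 1) :
    ∀ g : Fin m → Fin N, g z ∉ B → g t₁ ∈ B → (∀ s, s ≠ z → s ≠ t₁ → g s ∈ S') → A g = 0 := by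
  classical
  set J : Finset (Fin N) → Fin m → Finset (Fin N) :=
    fun X s => if s = z then X else if s = t₁ then B else S' with hJ
  have hJz : ∀ X, J X z = X := by intro X; simp [hJ]
  have hJt₁ : ∀ X, J X t₁ = B := by intro X; simp [hJ, hzt]
  have hJo : ∀ X s, s ≠ z → s ≠ t₁ → J X s = S' := by
    intro X s hsz hst; simp [hJ, hsz, hst]
  have hupd : ∀ X : Finset (Fin N), Function.update (J univ) z X = J X := by
    intro X; funext s
    rcases eq_or_ne s z with rfl | hs
    · rw [Function.update_self, hJz]
    · rw [Function.update_of_ne hs]; simp [hJ, hs]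
  have hXprod : ∏ s ∈ univ.erase t₁, ((J B s).card : ℝ)
      = ∏ s ∈ univ.erase z, ((J univ s).card : ℝ) := by
    rw [← Finset.mul_prod_erase (univ.erase t₁) _
        (show z ∈ univ.erase t₁ by simp [Ne.symm hzt]),
      ← Finset.mul_prod_erase (univ.erase z) _
        (show t₁ ∈ univ.erase z by simp [hzt]),
      hJz, hJt₁]
    congr 1
    rw [Finset.erase_right_comm]
    refine Finset.prod_congr rfl fun s hs => ?_
    simp only [Finset.mem_erase] at hs
    rw [hJo B s hs.2.1 hs.1, hJo univ s hs.2.1 hs.1]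
  have hEB : ∑ g ∈ Fintype.piFinset (J B), A g
      = ∏ s ∈ univ.erase t₁, ((J B s).card : ℝ) := by
    refine peel A hA hN t₁ (J B) ?_
    intro g hg
    rw [hJt₁]
    refine h1 g ?_ ?_
    · have := hg z (Ne.symm hzt); rwa [hJz] at this
    · intro s hsz hst
      have := hg s hst; rwa [hJo B s hsz hst] at this
  have hEU : ∑ g ∈ Fintype.piFinset (J univ), A g
      = ∏ s ∈ univ.erase z, ((J univ s).card : ℝ) := by
    refine peel A hA hN z (J univ) ?_
    intro g hg
    rw [hJz]
    exact hA.2 z g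
  have hsplit := sum_split_set z (J univ) B Bᶜ disjoint_compl_right
    (by rw [hJz, Finset.union_compl]) A
  rw [hupd B, hupd Bᶜ] at hsplit
  have hzero : ∑ g ∈ Fintype.piFinset (J Bᶜ), A g = 0 := by
    rw [hEB, hXprod] at hsplit
    linarith [hEU, hsplit]
  intro g hgz hgt hgs
  refine (Finset.sum_eq_zero_iff_of_nonneg (fun g' _ => hA.1 g')).1 hzero g ?_
  refine Fintype.mem_piFinset.2 fun s => ?_
  rcases eq_or_ne s z with rfl | hsz
  · rw [hJz]; exact Finset.mem_compl.2 hgz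
  rcases eq_or_ne s t₁ with rfl | hst
  · rw [hJt₁]; exact hgt
  · rw [hJo _ s hsz hst]; exact hgs s hsz hst


lemma converse_dir (hm : 3 ≤ m) (hA : MStochastic A) (hp0 : ∀ i, 0 ≤ p i)
    (hpsum : ∑ i, p i = 1) {z t₁ : Fin m} (hzt : t₁ ≠ z) (I : Finset (Fin N))
    (hvan : ∀ g : Fin m → Fin N, g z ∈ I → (∀ t, t ≠ z → g t ∉ I) → A g = 0)
    (hpI : ∀ i, p i = if i ∈ I then 0 else ((Iᶜ.card : ℕ) : ℝ)⁻¹) :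
    mAct A z (fun _ => p) = p := by
  classical
  have hN : N ≠ 0 := by rintro rfl; simp at hpsum
  have hex : ∃ i, i ∉ I := by
    by_contra hc
    push_neg at hc
    have hall : ∀ i, p i = 0 := fun i => by rw [hpI i, if_pos (hc i)]
    rw [Finset.sum_congr rfl fun i _ => hall i, Finset.sum_const, smul_zero] at hpsum
    norm_num at hpsum
  obtain ⟨iS, hiS⟩ := hex
  have hkpos : 0 < Iᶜ.card := Finset.card_pos.2 ⟨iS, Finset.mem_compl.2 hiS⟩
  have hkR : ((Iᶜ.card : ℕ) : ℝ) ≠ 0 := Nat.cast_ne_zero.2 hkpos.ne'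
  have h1 : ∀ g : Fin m → Fin N, g z ∈ I → (∀ s, s ≠ z → s ≠ t₁ → g s ∈ Iᶜ) →
      ∑ v ∈ I, A (Function.update g t₁ v) = 1 := by
    intro g hgz hgs
    have htot := hA.2 t₁ g
    rw [← Finset.sum_add_sum_compl I (fun v => A (Function.update g t₁ v))] at htot
    have hzero : ∑ v ∈ Iᶜ, A (Function.update g t₁ v) = 0 := by
      refine Finset.sum_eq_zero fun v hv => ?_
      refine hvan _ ?_ ?_
      · rw [Function.update_of_ne (Ne.symm hzt)]; exact hgz
      · intro t ht
        rcases eq_or_ne t t₁ with rfl | htt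
        · rw [Function.update_self]; exact Finset.mem_compl.1 hv
        · rw [Function.update_of_ne htt]; exact Finset.mem_compl.1 (hgs t ht htt)
    rw [hzero, add_zero] at htot
    exact htot
  have hP2 := key A hA hN hzt I Iᶜ h1
  funext i
  by_cases hi : i ∈ I
  · rw [mAct_eq, hpI i, if_pos hi]
    refine Finset.sum_eq_zero fun h _ => ?_
    by_cases hhS : ∀ s' : {s : Fin m // s ≠ z}, h s' ∉ I
    · rw [hvan (cmb z i h) (by rw [cmb_self]; exact hi)
        (fun t ht => by rw [cmb_ne _ _ _ ht]; exact hhS ⟨t, ht⟩), zero_mul]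
    · push_neg at hhS
      obtain ⟨s', hs'⟩ := hhS
      rw [Finset.prod_eq_zero (mem_univ s') (by rw [hpI, if_pos hs']), mul_zero]
  · rw [mAct_eq, hpI i, if_neg hi]
    set c : ℝ := ((Iᶜ.card : ℕ) : ℝ)⁻¹ with hc
    set r := Fintype.card {s : Fin m // s ≠ z} with hrdef
    have hrcard : r = m - 1 := by
      rw [hrdef, Fintype.card_subtype, Finset.filter_ne' univ z,
        Finset.card_erase_of_mem (mem_univ z), Finset.card_univ, Fintype.card_fin]
    have hprodp : ∀ h : {s : Fin m // s ≠ z} → Fin N,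
        ∏ s' : {s : Fin m // s ≠ z}, p (h s')
          = if (∀ s' : {s : Fin m // s ≠ z}, h s' ∉ I) then c ^ r else 0 := by
      intro h
      by_cases hh : ∀ s' : {s : Fin m // s ≠ z}, h s' ∉ I
      · rw [if_pos hh, Finset.prod_congr rfl fun s' _ => by rw [hpI, if_neg (hh s')],
          Finset.prod_const, Finset.card_univ]
      · rw [if_neg hh]
        push_neg at hh
        obtain ⟨s', hs'⟩ := hh
        exact Finset.prod_eq_zero (mem_univ s') (by rw [hpI, if_pos hs'])
    rw [Finset.sum_congr rfl fun h _ => by rw [hprodp h]]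
    simp_rw [mul_ite, mul_zero]
    rw [← Finset.sum_filter, ← Finset.sum_mul]
    have hQ : ∑ h ∈ univ.filter (fun h : {s : Fin m // s ≠ z} → Fin N =>
          ∀ s' : {s : Fin m // s ≠ z}, h s' ∉ I), A (cmb z i h)
        = ∑ g ∈ Fintype.piFinset
            (fun s => if s = z then ({i} : Finset (Fin N)) else Iᶜ), A g := by
      refine Finset.sum_nbij' (i := fun h => cmb z i h) (j := fun g => fun s' => g s'.1)
        ?_ ?_ ?_ ?_ ?_
      · intro h hh
        refine Fintype.mem_piFinset.2 fun s => ?_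
        beta_reduce
        rcases eq_or_ne s z with hs | hs
        · subst hs
          rw [if_pos rfl, cmb_self]; exact Finset.mem_singleton_self i
        · rw [if_neg hs, cmb_ne _ _ _ hs]
          exact Finset.mem_compl.2 ((Finset.mem_filter.1 hh).2 ⟨s, hs⟩)
      · intro g hg
        refine Finset.mem_filter.2 ⟨mem_univ _, fun s' => ?_⟩
        have := Fintype.mem_piFinset.1 hg s'.1
        rw [if_neg s'.2] at this
        exact Finset.mem_compl.1 this
      · intro h hh
        funext s'
        beta_reduce
        rw [cmb_ne _ _ _ s'.2]
      · intro g hg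
        funext s
        beta_reduce
        rcases eq_or_ne s z with hs | hs
        · subst hs
          rw [cmb_self]
          have h2 := Fintype.mem_piFinset.1 hg s
          rw [if_pos rfl] at h2
          exact (Finset.mem_singleton.1 h2).symm
        · rw [cmb_ne _ _ _ hs]
      · intro h hh
        rfl
    have hpeel : ∑ g ∈ Fintype.piFinset
          (fun s => if s = z then ({i} : Finset (Fin N)) else Iᶜ), A g
        = ∏ s ∈ univ.erase t₁,
            (((if s = z then ({i} : Finset (Fin N)) else Iᶜ)).card : ℝ) := by
      refine peel A hA hN t₁ _ ?_
      intro g hg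
      rw [if_neg hzt]
      have hgz : g z = i := by
        have := hg z (Ne.symm hzt)
        rw [if_pos rfl] at this
        exact Finset.mem_singleton.1 this
      have htot := hA.2 t₁ g
      rw [← Finset.sum_add_sum_compl I (fun v => A (Function.update g t₁ v))] at htot
      have hz0 : ∑ v ∈ I, A (Function.update g t₁ v) = 0 := by
        refine Finset.sum_eq_zero fun v hv => ?_
        refine hP2 _ ?_ ?_ ?_
        · rw [Function.update_of_ne (Ne.symm hzt), hgz]; exact hi
        · rw [Function.update_self]; exact hv
        · intro s hsz hst
          rw [Function.update_of_ne hst]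
          have := hg s hst
          rwa [if_neg hsz] at this
      rw [hz0, zero_add] at htot
      exact htot
    have hprodcard : ∏ s ∈ univ.erase t₁,
          (((if s = z then ({i} : Finset (Fin N)) else Iᶜ)).card : ℝ)
        = ((Iᶜ.card : ℕ) : ℝ) ^ (m - 2) := by
      rw [← Finset.mul_prod_erase (univ.erase t₁) _
          (show z ∈ univ.erase t₁ by simp [Ne.symm hzt]), if_pos rfl,
        Finset.card_singleton]
      have hcongr : ∀ s ∈ ((univ.erase t₁).erase z),
          (((if s = z then ({i} : Finset (Fin N)) else Iᶜ)).card : ℝ)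
            = ((Iᶜ.card : ℕ) : ℝ) := by
        intro s hs
        rw [if_neg (Finset.mem_erase.1 hs).1]
      rw [Finset.prod_congr rfl hcongr, Finset.prod_const]
      have hcard2 : ((univ.erase t₁).erase z).card = m - 2 := by
        rw [Finset.card_erase_of_mem (by simp [Ne.symm hzt]),
          Finset.card_erase_of_mem (mem_univ t₁), Finset.card_univ, Fintype.card_fin]
        omega
      rw [hcard2]
      push_cast
      ring
    rw [hQ, hpeel, hprodcard]
    have hr2 : r = (m - 2) + 1 := by omega
    rw [hr2, pow_succ, hc, ← mul_assoc, ← mul_pow, mul_inv_cancel₀ hkR, one_pow, one_mul]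


lemma forward_dir (hm : 3 ≤ m) (hA : MStochastic A) (hp0 : ∀ i, 0 ≤ p i)
    (hpsum : ∑ i, p i = 1) {z t₁ t₂ : Fin m}
    (hz1 : t₁ ≠ z) (hz2 : t₂ ≠ z) (h12 : t₁ ≠ t₂)
    (heq : mAct A z (fun _ => p) = p) :
    ∃ I : Finset (Fin N),
      (∀ g : Fin m → Fin N, g z ∈ I → (∀ t, t ≠ z → g t ∉ I) → A g = 0) ∧
      ∀ i, p i = if i ∈ I then 0 else ((Iᶜ.card : ℕ) : ℝ)⁻¹ := by
  classical
  have hN : N ≠ 0 := by rintro rfl; simp at hpsum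
  haveI hNe : Nonempty (Fin N) := ⟨⟨0, Nat.pos_of_ne_zero hN⟩⟩
  have heqi : ∀ i, ∑ h : {s : Fin m // s ≠ z} → Fin N,
      A (cmb z i h) * ∏ s' : {s : Fin m // s ≠ z}, p (h s') = p i := by
    intro i
    rw [← mAct_eq A p z i]
    exact congrFun heq i
  obtain ⟨i₀, -, hmax'⟩ := Finset.exists_max_image univ p Finset.univ_nonempty
  have hmax : ∀ j, p j ≤ p i₀ := fun j => hmax' j (mem_univ j)
  have hμ : 0 < p i₀ := by
    by_contra hcon
    push_neg at hcon
    have hall : ∀ i, p i = 0 := fun i => le_antisymm ((hmax i).trans hcon) (hp0 i)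
    rw [Finset.sum_congr rfl fun i _ => hall i, Finset.sum_const, smul_zero] at hpsum
    norm_num at hpsum
  have hnn : ∀ i : Fin N, ∀ h ∈ (univ : Finset ({s : Fin m // s ≠ z} → Fin N)),
      0 ≤ A (cmb z i h) * ∏ s' : {s : Fin m // s ≠ z}, p (h s') :=
    fun i h _ => mul_nonneg (hA.1 _) (Finset.prod_nonneg fun s' _ => hp0 _)
  have V : ∀ (t' : {s : Fin m // s ≠ z}) (i : Fin N), p i = p i₀ →
      ∀ h : {s : Fin m // s ≠ z} → Fin N, p (h t') ≠ p i₀ →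
      (∀ s', s' ≠ t' → p (h s') ≠ 0) → A (cmb z i h) = 0 := by
    intro t' i hi h hht hhs
    have hR := R_eq_one A p hA hN hpsum z t' i
    have hM := heqi i
    have hsum0 : ∑ h' : {s : Fin m // s ≠ z} → Fin N,
        A (cmb z i h') * ((p i₀ - p (h' t')) * ∏ s' ∈ univ.erase t', p (h' s')) = 0 := by
      have expand : ∀ h' : {s : Fin m // s ≠ z} → Fin N,
          A (cmb z i h') * ((p i₀ - p (h' t')) * ∏ s' ∈ univ.erase t', p (h' s'))
            = p i₀ * (A (cmb z i h') * ∏ s' ∈ univ.erase t', p (h' s'))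
              - A (cmb z i h') * ∏ s' : {s : Fin m // s ≠ z}, p (h' s') := by
        intro h'
        rw [← Finset.mul_prod_erase univ (fun s' => p (h' s')) (mem_univ t')]
        ring
      rw [Finset.sum_congr rfl fun h' _ => expand h', Finset.sum_sub_distrib,
        ← Finset.mul_sum, hR, hM, hi, mul_one, sub_self]
    have h0 := (Finset.sum_eq_zero_iff_of_nonneg
      (fun h' _ => mul_nonneg (hA.1 _) (mul_nonneg (sub_nonneg.2 (hmax _))
        (Finset.prod_nonneg fun s' _ => hp0 _)))).1 hsum0 h (mem_univ h)
    rcases mul_eq_zero.1 h0 with hcase | hcase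
    · exact hcase
    · exfalso
      have f1 : p i₀ - p (h t') ≠ 0 := sub_ne_zero_of_ne (Ne.symm hht)
      have f2 : ∏ s' ∈ univ.erase t', p (h s') ≠ 0 :=
        Finset.prod_ne_zero_iff.2 fun s' hs' => hhs s' (Finset.ne_of_mem_erase hs')
      exact (mul_ne_zero f1 f2) hcase
  set T : Finset (Fin N) := univ.filter (fun v => p v = p i₀) with hT
  set t₁' : {s : Fin m // s ≠ z} := ⟨t₁, hz1⟩ with ht₁'
  set t₂' : {s : Fin m // s ≠ z} := ⟨t₂, hz2⟩ with ht₂'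
  have h12' : t₁' ≠ t₂' := fun hcc => h12 (congrArg Subtype.val hcc)
  have ES : ∀ i, p i = p i₀ → ∀ h₂ : {s' : {s : Fin m // s ≠ z} // s' ≠ t₂'} → Fin N,
      (∀ s'', p (h₂ s'') ≠ 0) → ∑ v ∈ T, A (cmb z i (cmb t₂' v h₂)) = 1 := by
    intro i hi h₂ hh₂
    have htot := stoch_cmb_cmb A hA hN z t₂' i h₂
    rw [← Finset.sum_add_sum_compl T (fun v => A (cmb z i (cmb t₂' v h₂)))] at htot
    have h0 : ∑ v ∈ Tᶜ, A (cmb z i (cmb t₂' v h₂)) = 0 := by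
      refine Finset.sum_eq_zero fun v hv => ?_
      have hvT : p v ≠ p i₀ := by
        have h3 := Finset.mem_compl.1 hv
        simpa [hT] using h3
      refine V t₂' i hi _ ?_ ?_
      · rw [cmb_self]; exact hvT
      · intro s' hs'
        rw [cmb_ne _ _ _ hs']
        exact hh₂ ⟨s', hs'⟩
    rw [h0, add_zero] at htot
    exact htot
  have huni : ∀ j, p j ≠ 0 → p j = p i₀ := by
    intro j hj
    by_contra hjμ
    set h₂ : {s' : {s : Fin m // s ≠ z} // s' ≠ t₂'} → Fin N :=
      fun s'' => if s''.1 = t₁' then j else i₀ with hh₂def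
    have hh₂ : ∀ s'', p (h₂ s'') ≠ 0 := by
      intro s''
      by_cases hcs : s''.1 = t₁' <;> simp [hh₂def, hcs, hj, hμ.ne']
    have h1 := ES i₀ rfl h₂ hh₂
    have hzero : ∀ v ∈ T, A (cmb z i₀ (cmb t₂' v h₂)) = 0 := by
      intro v hv
      refine V t₁' i₀ rfl _ ?_ ?_
      · rw [cmb_ne t₂' v h₂ h12']
        have hval : h₂ ⟨t₁', h12'⟩ = j := by
          rw [hh₂def]
          beta_reduce
          rw [if_pos rfl]
        rw [hval]
        exact hjμ
      · intro s' hs'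
        by_cases hcs : s' = t₂'
        · subst hcs
          rw [cmb_self]
          have hpv : p v = p i₀ := by simpa [hT] using hv
          rw [hpv]
          exact hμ.ne'
        · rw [cmb_ne _ _ _ hcs]
          have hval : h₂ ⟨s', hcs⟩ = i₀ := by
            rw [hh₂def]
            beta_reduce
            rw [if_neg hs']
          rw [hval]
          exact hμ.ne'
    rw [Finset.sum_eq_zero hzero] at h1
    norm_num at h1
  refine ⟨univ.filter (fun i => p i = 0), ?_, ?_⟩
  · intro g hg hgt
    have hgz : p (g z) = 0 := (Finset.mem_filter.1 hg).2
    have h0 : ∑ h : {s : Fin m // s ≠ z} → Fin N,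
        A (cmb z (g z) h) * ∏ s' : {s : Fin m // s ≠ z}, p (h s') = 0 := by
      rw [heqi (g z), hgz]
    have hterm := (Finset.sum_eq_zero_iff_of_nonneg (hnn (g z))).1 h0
      (fun s' => g s'.1) (mem_univ _)
    rw [cmb_eta] at hterm
    rcases mul_eq_zero.1 hterm with hcase | hcase
    · exact hcase
    · exfalso
      refine (Finset.prod_ne_zero_iff.2 fun s' _ => ?_) hcase
      intro hc
      exact (hgt s'.1 s'.2) (Finset.mem_filter.2 ⟨mem_univ _, hc⟩)
  · set I := univ.filter (fun i => p i = 0) with hI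
    have hsumsplit := Finset.sum_add_sum_compl I p
    rw [hpsum] at hsumsplit
    have hIzero : ∑ i ∈ I, p i = 0 :=
      Finset.sum_eq_zero fun i hi => (Finset.mem_filter.1 hi).2
    have hIc : ∀ i ∈ Iᶜ, p i = p i₀ := by
      intro i hi
      refine huni i ?_
      have h3 := Finset.mem_compl.1 hi
      simpa [hI] using h3
    rw [hIzero, zero_add, Finset.sum_congr rfl hIc, Finset.sum_const,
      nsmul_eq_mul] at hsumsplit
    have hcard0 : ((Iᶜ.card : ℕ) : ℝ) ≠ 0 := by
      intro hcc
      rw [hcc, zero_mul] at hsumsplit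
      norm_num at hsumsplit
    have hμinv : p i₀ = ((Iᶜ.card : ℕ) : ℝ)⁻¹ := by
      field_simp
      linarith [hsumsplit]
    intro i
    by_cases hi : i ∈ I
    · rw [if_pos hi]
      exact (Finset.mem_filter.1 hi).2
    · rw [if_neg hi, ← hμinv]
      refine huni i ?_
      simpa [hI] using hi

end Tensor

theorem mStochastic_eigenvector_characterization {N m : ℕ} (hm : 3 ≤ m)
    (A : (Fin m → Fin N) → ℝ) (hA : MStochastic A)
    (p : Fin N → ℝ) (hp : p ∈ stdSimplex ℝ (Fin N)) :
    ((∃ lam : ℝ, mAct A ⟨0, by omega⟩ (fun _ => p) = lam • p) ↔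
      (∃ I : Finset (Fin N),
        (∀ g : Fin m → Fin N,
          g ⟨0, by omega⟩ ∈ I → (∀ t : Fin m, t ≠ ⟨0, by omega⟩ → g t ∉ I) → A g = 0) ∧
        ∀ i, p i = if i ∈ I then 0 else ((N : ℝ) - I.card)⁻¹)) ∧
    ((∃ lam : ℝ, mAct A ⟨0, by omega⟩ (fun _ => p) = lam • p) →
      mAct A ⟨0, by omega⟩ (fun _ => p) = p) := by
  obtain ⟨hp0, hpsum⟩ := hp
  have hz1 : (⟨1, by omega⟩ : Fin m) ≠ ⟨0, by omega⟩ := Fin.ne_of_val_ne (by norm_num)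
  have hz2 : (⟨2, by omega⟩ : Fin m) ≠ ⟨0, by omega⟩ := Fin.ne_of_val_ne (by norm_num)
  have h12 : (⟨1, by omega⟩ : Fin m) ≠ ⟨2, by omega⟩ := Fin.ne_of_val_ne (by norm_num)
  have hcast : ∀ I : Finset (Fin N), ((N : ℝ) - I.card) = ((Iᶜ.card : ℕ) : ℝ) := by
    intro I
    rw [Finset.card_compl, Fintype.card_fin,
      Nat.cast_sub (by simpa using Finset.card_le_univ I)]
  have himp : (∃ lam : ℝ, mAct A ⟨0, by omega⟩ (fun _ => p) = lam • p) →
      mAct A (⟨0, by omega⟩ : Fin m) (fun _ => p) = p := by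
    rintro ⟨lam, hE⟩
    have hN : N ≠ 0 := by rintro rfl; simp at hpsum
    have hs1 := sum_mAct A p hA hN hpsum ⟨0, by omega⟩
    rw [hE] at hs1
    have hs2 : ∑ i, (lam • p) i = lam := by
      simp only [Pi.smul_apply, smul_eq_mul]
      rw [← Finset.mul_sum, hpsum, mul_one]
    rw [hs2] at hs1
    rw [hE, hs1, one_smul]
  refine ⟨⟨?_, ?_⟩, himp⟩
  · intro hEx
    obtain ⟨I, hvan, hpI⟩ := forward_dir A p hm hA hp0 hpsum hz1 hz2 h12 (himp hEx)
    exact ⟨I, hvan, fun i => by rw [hpI i, hcast I]⟩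
  · rintro ⟨I, hvan, hpI⟩
    refine ⟨1, ?_⟩
    rw [one_smul]
    exact converse_dir A p hm hA hp0 hpsum hz1 I hvan (fun i => by rw [hpI i, hcast I])
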